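/- arXiv:1308.5493 — 5 statements merged into one kernel-verified Lean document; each statement's English description precedes it below -/
import Mathlib

section
/- Suppose R_0 = (β/(ρ+β))(α_S/μ) ∑_{k≥0} k(k-1) p_k ≤ 1, and either p_1 > 0, ρ > 0, or μ_R > 0. Let h(θ) = μθ - α_S ∑ k θ^{k-1} p_k - μ_R - ρμ(1-θ)/β with h(1) = 0. Then h(θ) < 0 for all θ ∈ (0,1). -/
/-! With `G'(θ) = ∑ k θ^(k-1) p_k`, the condition `h 1 = 0` turns `h θ` into
`α_S (G'(1) - G'(θ)) - (1 - θ)(ρ + β)μ/β`. Bernoulli's inequality gives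
`k (1 - θ^(k-1)) ≤ (1 - θ) k (k - 1)`, strictly for `k ≥ 3`, so `G'(1) - G'(θ) ≤ (1 - θ) ∑ k(k-1) p_k`,
and `R₀ ≤ 1` bounds `α_S` times the right side by `(1 - θ)(ρ + β)μ/β`. If some `p_k` with `k ≥ 3`
is positive the first inequality is strict; otherwise `G'` is affine and
`h θ = -(1 - θ)(α_S p_1 + μ_R + ρμ/β)`, which is negative because `p_1`, `ρ` or `μ_R` is positive. -/

lemma one_sub_pow_lt_mul_one_sub {θ : ℝ} (hθ0 : 0 ≤ θ) (hθ1 : θ ≠ 1) {n : ℕ} (hn : 2 ≤ n) :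
    1 - θ ^ n < n * (1 - θ) := by
  have h := one_add_mul_self_lt_rpow_one_add (s := θ - 1) (by linarith) (sub_ne_zero.2 hθ1)
    (p := n) (by exact_mod_cast hn)
  rw [add_sub_cancel, Real.rpow_natCast] at h
  linarith

lemma natCast_mul_one_sub_pow_pred_mul_le {θ a : ℝ} (hθ : -1 ≤ θ) (ha : 0 ≤ a) (k : ℕ) :
    (k : ℝ) * (1 - θ ^ (k - 1)) * a ≤ (1 - θ) * (k * (k - 1) * a) := by
  rw [← mul_assoc]
  refine mul_le_mul_of_nonneg_right ?_ ha
  rcases k with _ | n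
  · simp
  · have := one_add_mul_sub_le_pow hθ n
    simp only [Nat.add_sub_cancel, Nat.cast_add, Nat.cast_one, add_sub_cancel_right]
    nlinarith

lemma natCast_mul_one_sub_pow_pred_mul_lt {θ a : ℝ} (hθ0 : 0 ≤ θ) (hθ1 : θ ≠ 1) (ha : 0 < a)
    {k : ℕ} (hk : 3 ≤ k) : (k : ℝ) * (1 - θ ^ (k - 1)) * a < (1 - θ) * (k * (k - 1) * a) := by
  rw [← mul_assoc]
  refine mul_lt_mul_of_pos_right ?_ ha
  obtain ⟨n, rfl⟩ : ∃ n, k = n + 1 := ⟨k - 1, by omega⟩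
  have := one_sub_pow_lt_mul_one_sub hθ0 hθ1 (n := n) (by omega)
  simp only [Nat.add_sub_cancel, Nat.cast_add, Nat.cast_one, add_sub_cancel_right]
  nlinarith

lemma natCast_mul_one_sub_pow_pred_mul_nonneg {p : ℕ → ℝ} {θ : ℝ} (hθ0 : 0 ≤ θ) (hθ1 : θ ≤ 1)
    (hp : ∀ k, 0 ≤ p k) (k : ℕ) : 0 ≤ (k : ℝ) * (1 - θ ^ (k - 1)) * p k :=
  mul_nonneg (mul_nonneg k.cast_nonneg (sub_nonneg.2 (pow_le_one₀ hθ0 hθ1))) (hp k)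

/-- `G'(θ)` above; the truncation of `k - 1` at `k = 0` is harmless because of the factor `k`. -/
noncomputable def pgfDeriv (p : ℕ → ℝ) (θ : ℝ) : ℝ :=
  ∑' k : ℕ, (k : ℝ) * θ ^ (k - 1) * p k

section
variable {p : ℕ → ℝ}

lemma pgfDeriv_of_forall_three_le_eq_zero (hp : ∀ k, 3 ≤ k → p k = 0) (θ : ℝ) :
    pgfDeriv p θ = p 1 + 2 * θ * p 2 := by
  rw [pgfDeriv, tsum_eq_sum (s := Finset.range 3) fun k hk => by simp [hp k (by simpa using hk)]]
  simp [Finset.sum_range_succ]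

variable (hp : ∀ k, 0 ≤ p k) (h2 : Summable fun k : ℕ => (k : ℝ) ^ 2 * p k)
include hp h2

lemma summable_natCast_mul_pow_pred_mul {θ : ℝ} (hθ0 : 0 ≤ θ) (hθ1 : θ ≤ 1) :
    Summable fun k : ℕ => (k : ℝ) * θ ^ (k - 1) * p k := by
  refine h2.of_nonneg_of_le (fun k => by have := hp k; positivity) fun k => ?_
  have hpk := hp k
  have hk : (k : ℝ) ≤ (k : ℝ) ^ 2 := by
    rcases k with _ | n
    · simp
    · push_cast; nlinarith
  calc (k : ℝ) * θ ^ (k - 1) * p k ≤ k * 1 * p k := by gcongr; exact pow_le_one₀ hθ0 hθ1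
    _ ≤ (k : ℝ) ^ 2 * p k := by rw [mul_one]; gcongr

lemma summable_natCast_mul_natCast_sub_one_mul :
    Summable fun k : ℕ => (k : ℝ) * ((k : ℝ) - 1) * p k := by
  refine h2.of_nonneg_of_le (fun k => ?_) fun k => ?_
  · rcases k with _ | n
    · simp
    · have := hp (n + 1); push_cast; rw [add_sub_cancel_right]; positivity
  · have := hp k
    have : (0 : ℝ) ≤ k := k.cast_nonneg
    nlinarith

lemma pgfDeriv_one_sub_eq {θ : ℝ} (hθ0 : 0 ≤ θ) (hθ1 : θ ≤ 1) :
    pgfDeriv p 1 - pgfDeriv p θ = ∑' k : ℕ, (k : ℝ) * (1 - θ ^ (k - 1)) * p k := by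
  rw [pgfDeriv, pgfDeriv, ← (summable_natCast_mul_pow_pred_mul hp h2 zero_le_one le_rfl).tsum_sub
    (summable_natCast_mul_pow_pred_mul hp h2 hθ0 hθ1)]
  congr 1 with k
  ring

lemma pgfDeriv_one_sub_lt {θ : ℝ} (hθ0 : 0 ≤ θ) (hθ1 : θ < 1) (hk : ∃ k, 3 ≤ k ∧ 0 < p k) :
    pgfDeriv p 1 - pgfDeriv p θ < (1 - θ) * ∑' k : ℕ, (k : ℝ) * ((k : ℝ) - 1) * p k := by
  obtain ⟨k, hk3, hpk⟩ := hk
  rw [pgfDeriv_one_sub_eq hp h2 hθ0 hθ1.le, ← tsum_mul_left]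
  exact Summable.tsum_lt_tsum_of_nonneg (natCast_mul_one_sub_pow_pred_mul_nonneg hθ0 hθ1.le hp)
    (fun k => natCast_mul_one_sub_pow_pred_mul_le (by linarith) (hp k) k)
    (natCast_mul_one_sub_pow_pred_mul_lt hθ0 hθ1.ne hpk hk3)
    ((summable_natCast_mul_natCast_sub_one_mul hp h2).mul_left (1 - θ))

end

theorem sir_h_neg_subcritical_general (p : ℕ → ℝ) (αS μ β ρ μR : ℝ)
    (hp : ∀ k, 0 ≤ p k)
    (h2 : Summable fun k : ℕ => (k : ℝ) ^ 2 * p k)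
    (hαS : 0 < αS) (hμ : 0 < μ) (hβ : 0 < β) (hρ : 0 ≤ ρ) (hμR : 0 ≤ μR)
    (hR0 : β / (ρ + β) * (αS / μ) * (∑' k : ℕ, (k : ℝ) * ((k : ℝ) - 1) * p k) ≤ 1)
    (hD6 : 0 < p 1 ∨ 0 < ρ ∨ 0 < μR)
    (h : ℝ → ℝ)
    (hdef : ∀ θ, h θ =
      μ * θ - αS * (∑' k : ℕ, (k : ℝ) * θ ^ (k - 1) * p k) - μR - ρ * μ * (1 - θ) / β)
    (h1 : h 1 = 0) :
    ∀ θ ∈ Set.Ioo (0:ℝ) 1, h θ < 0 := by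
  rintro θ ⟨hθ0, hθ1⟩
  have hdef' (θ : ℝ) : h θ = μ * θ - αS * pgfDeriv p θ - μR - ρ * μ * (1 - θ) / β := hdef θ
  have hμR_eq : μR = μ - αS * pgfDeriv p 1 := by
    have := hdef' 1
    simp only [h1, sub_self, mul_zero, zero_div, mul_one] at this
    linarith
  by_cases hk : ∃ k, 3 ≤ k ∧ 0 < p k
  · have hR0' : αS * ∑' k : ℕ, (k : ℝ) * ((k : ℝ) - 1) * p k ≤ (ρ + β) * μ / β := by
      rw [le_div_iff₀ hβ]
      rw [div_mul_div_comm, div_mul_eq_mul_div, div_le_one (by positivity)] at hR0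
      linarith
    have hθ : h θ = αS * (pgfDeriv p 1 - pgfDeriv p θ) - (1 - θ) * ((ρ + β) * μ / β) := by
      rw [hdef', hμR_eq]
      field_simp
      ring
    rw [hθ, sub_neg]
    calc _ < αS * ((1 - θ) * ∑' k : ℕ, (k : ℝ) * ((k : ℝ) - 1) * p k) :=
          mul_lt_mul_of_pos_left (pgfDeriv_one_sub_lt hp h2 hθ0.le hθ1 hk) hαS
      _ ≤ (1 - θ) * ((ρ + β) * μ / β) := by
        rw [mul_left_comm]; exact mul_le_mul_of_nonneg_left hR0' (by linarith)
  · push Not at hk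
    have hp3 k (hk3 : 3 ≤ k) : p k = 0 := (hk k hk3).antisymm (hp k)
    have hθ : h θ = -((1 - θ) * (αS * p 1 + μR + ρ * μ / β)) := by
      rw [hdef', hμR_eq, pgfDeriv_of_forall_three_le_eq_zero hp3,
        pgfDeriv_of_forall_three_le_eq_zero hp3]
      field_simp
      ring
    have hslack : 0 < αS * p 1 + μR + ρ * μ / β := by
      rcases hD6 with hc | hc | hc <;> have := hp 1 <;> positivity
    rw [hθ, neg_neg_iff_pos]
    exact mul_pos (by linarith) hslack

/-- if `R₀ ≤ 1` and (`p₁ > 0` or `ρ > 0` or `μ_R > 0`), and `h(1) = 0`,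
then `h(θ) < 0` for all `θ ∈ (0,1)`. -/
theorem sir_h_neg_subcritical (p : ℕ → ℝ) (αS μ β ρ μR : ℝ)
    (hp : ∀ k, 0 ≤ p k) (hpsum : ∑' k : ℕ, p k = 1)
    (h2 : Summable fun k : ℕ => (k : ℝ) ^ 2 * p k)
    (hαS : 0 < αS) (hαS1 : αS ≤ 1) (hμ : 0 < μ) (hβ : 0 < β) (hρ : 0 ≤ ρ) (hμR : 0 ≤ μR)
    (hR0 : β / (ρ + β) * (αS / μ) * (∑' k : ℕ, (k : ℝ) * ((k : ℝ) - 1) * p k) ≤ 1)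
    (hD6 : 0 < p 1 ∨ 0 < ρ ∨ 0 < μR)
    (h : ℝ → ℝ)
    (hdef : ∀ θ, h θ =
      μ * θ - αS * (∑' k : ℕ, (k : ℝ) * θ ^ (k - 1) * p k) - μR - ρ * μ * (1 - θ) / β)
    (h1 : h 1 = 0) :
    ∀ θ ∈ Set.Ioo (0:ℝ) 1, h θ < 0 :=
  sir_h_neg_subcritical_general p αS μ β ρ μR hp h2 hαS hμ hβ hρ hμR hR0 hD6 h hdef h1
end

section
/- Let Y_ℓ be a random variable on {0,...,ℓ} with P(Y_ℓ = j) = (ρ/(ℓβ+ρ)) · (ℓ)_j / (ℓ + ρ/β - 1)_j, where (n)_j denotes the falling factorial, for ρ, β > 0 and ℓ ≥ 0. Then these probabilities are nonnegative and sum to 1, and E[Y_ℓ] = (β/(β+ρ))·ℓ. -/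
open scoped BigOperators

/-- The falling factorial `(x)_j = x(x-1)⋯(x-j+1)` for a real `x`. -/
def fallFac (x : ℝ) (j : ℕ) : ℝ := ∏ i ∈ Finset.range j, (x - i)

/-!
With `r = ρ/β` and `a_j = (ℓ)_j / (ℓ + r - 1)_j`, the ratio `a_{j+1} / a_j = (ℓ - j) / (ℓ + r - 1 - j)`
makes `g_j = a_j (ℓ + r - j)` satisfy `g_j - g_{j+1} = r a_j` and `j g_j - (j+1) g_{j+1} = ((r+1) j - ℓ) a_j`.
Since `g_0 = ℓ + r` and `a_{ℓ+1} = 0`, telescoping gives `r ∑ a_j = ℓ + r` and `(r + 1) ∑ j a_j = ℓ ∑ a_j`,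
which are the normalisation and the mean once the prefactor `ρ/(ℓβ+ρ) = r/(ℓ+r)` is put back.
-/

theorem fallFac_zero (x : ℝ) : fallFac x 0 = 1 := Finset.prod_range_zero _

theorem fallFac_succ (x : ℝ) (j : ℕ) : fallFac x (j + 1) = fallFac x j * (x - j) :=
  Finset.prod_range_succ _ _

theorem fallFac_pos {x : ℝ} {j : ℕ} (h : (j : ℝ) < x + 1) : 0 < fallFac x j :=
  Finset.prod_pos fun i hi => by
    have : (i : ℝ) + 1 ≤ j := by exact_mod_cast Finset.mem_range.mp hi
    linarith

theorem fallFac_natCast_succ_self (n : ℕ) : fallFac n (n + 1) = 0 := by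
  simp [fallFac_succ]

/-- `P(Y_n = j)` for `r = ρ/β`, up to the factor `r / (n + r)`. -/
noncomputable def fallFacRatio (n : ℕ) (r : ℝ) (j : ℕ) : ℝ :=
  fallFac n j / fallFac (n + r - 1) j

section fallFacRatio

variable {n : ℕ} {r : ℝ}

theorem fallFacRatio_pos (hr : 0 < r) {j : ℕ} (hj : j ≤ n) : 0 < fallFacRatio n r j := by
  have hjn : (j : ℝ) ≤ n := by exact_mod_cast hj
  exact div_pos (fallFac_pos (by linarith)) (fallFac_pos (by linarith))

theorem fallFacRatio_succ_mul (hr : 0 < r) {j : ℕ} (hj : j ≤ n) :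
    fallFacRatio n r (j + 1) * (n + r - 1 - j) = fallFacRatio n r j * (n - j) := by
  rcases hj.eq_or_lt with rfl | hjn
  · simp [fallFacRatio, fallFac_natCast_succ_self]
  · have hjn : (j : ℝ) + 1 ≤ n := by exact_mod_cast hjn
    have hden : 0 < fallFac (n + r - 1) j := fallFac_pos (by linarith)
    have hstep : 0 < (n : ℝ) + r - 1 - j := by linarith
    simp only [fallFacRatio, fallFac_succ]
    field_simp

theorem mul_sum_fallFacRatio (hr : 0 < r) :
    r * ∑ j ∈ Finset.range (n + 1), fallFacRatio n r j = n + r := by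
  let g : ℕ → ℝ := fun k => fallFacRatio n r k * (n + r - k)
  have hstep : ∀ j ∈ Finset.range (n + 1), g j - g (j + 1) = r * fallFacRatio n r j := by
    intro j hj
    have := fallFacRatio_succ_mul hr (Nat.lt_succ_iff.mp (Finset.mem_range.mp hj))
    simp only [g]
    push_cast
    linarith
  rw [Finset.mul_sum, ← Finset.sum_congr rfl hstep, Finset.sum_range_sub']
  simp [g, fallFacRatio, fallFac_zero, fallFac_natCast_succ_self]

theorem mul_sum_natCast_mul_fallFacRatio (hr : 0 < r) :
    (r + 1) * ∑ j ∈ Finset.range (n + 1), (j : ℝ) * fallFacRatio n r j =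
      n * ∑ j ∈ Finset.range (n + 1), fallFacRatio n r j := by
  let g : ℕ → ℝ := fun k => k * fallFacRatio n r k * (n + r - k)
  have hstep : ∀ j ∈ Finset.range (n + 1),
      (r + 1) * (j * fallFacRatio n r j) - n * fallFacRatio n r j = g j - g (j + 1) := by
    intro j hj
    have := fallFacRatio_succ_mul hr (Nat.lt_succ_iff.mp (Finset.mem_range.mp hj))
    simp only [g]
    push_cast
    linear_combination ((j : ℝ) + 1) * this
  rw [← sub_eq_zero, Finset.mul_sum, Finset.mul_sum, ← Finset.sum_sub_distrib,
    Finset.sum_congr rfl hstep, Finset.sum_range_sub']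
  simp [g, fallFac_natCast_succ_self, fallFacRatio]

end fallFacRatio

/-- the numbers `P(Y_ℓ = j) = (ρ/(ℓβ+ρ)) (ℓ)_j/(ℓ+ρ/β-1)_j`, `0 ≤ j ≤ ℓ`,
are nonnegative, sum to `1`, and the corresponding mean is `(β/(β+ρ))ℓ`. -/
theorem sir_Y_distribution (ℓ : ℕ) (β ρ : ℝ) (hβ : 0 < β) (hρ : 0 < ρ) :
    (∀ j ∈ Finset.range (ℓ + 1),
      0 ≤ ρ / ((ℓ : ℝ) * β + ρ) * fallFac (ℓ : ℝ) j / fallFac ((ℓ : ℝ) + ρ / β - 1) j) ∧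
    (∑ j ∈ Finset.range (ℓ + 1),
      ρ / ((ℓ : ℝ) * β + ρ) * fallFac (ℓ : ℝ) j / fallFac ((ℓ : ℝ) + ρ / β - 1) j) = 1 ∧
    (∑ j ∈ Finset.range (ℓ + 1),
      (j : ℝ) * (ρ / ((ℓ : ℝ) * β + ρ) * fallFac (ℓ : ℝ) j / fallFac ((ℓ : ℝ) + ρ / β - 1) j))
      = β / (β + ρ) * ℓ := by
  set r := ρ / β with hr_def
  have hr : 0 < r := div_pos hρ hβ
  have hprob : ∀ j, ρ / ((ℓ : ℝ) * β + ρ) * fallFac ℓ j / fallFac (ℓ + r - 1) j =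
      r / (ℓ + r) * fallFacRatio ℓ r j := by
    intro j
    rw [fallFacRatio, mul_div_assoc, hr_def]
    congr 1
    field_simp
  simp only [hprob, mul_left_comm (_ : ℝ) (r / _), ← Finset.mul_sum]
  have hsum := mul_sum_fallFacRatio (n := ℓ) hr
  have hmean : (r + 1) * (r * ∑ j ∈ Finset.range (ℓ + 1), (j : ℝ) * fallFacRatio ℓ r j) =
      ℓ * (ℓ + r) := by
    rw [← hsum]
    linear_combination r * mul_sum_natCast_mul_fallFacRatio (n := ℓ) hr
  refine ⟨fun j hj => ?_, ?_, ?_⟩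
  · have := fallFacRatio_pos (n := ℓ) hr (Nat.lt_succ_iff.mp (Finset.mem_range.mp hj))
    positivity
  · field_simp
    linarith
  · rw [show β / (β + ρ) = 1 / (r + 1) by rw [hr_def]; field_simp; ring]
    field_simp
    linear_combination hmean
end

section
/- Let p_I : [θ_∞, 1] → [0,∞) be Lipschitz continuous with p_I(e^{-τ̂*}) = 0 where τ̂* = -ln θ_∞, and p_I(e^{-σ}) > 0 for σ ∈ [0, τ̂*). Define A(τ) = ∫_0^τ dσ/(β p_I(e^{-σ})) for τ ∈ [0, τ̂*). Then A is strictly increasing and A(τ) → ∞ as τ ↑ τ̂*. -/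
/-!
Write `q(σ) = β p_I(e^{-σ})` and `T = τ̂*`. Positivity and continuity of `q` on `[0, T)` make `A`
strictly increasing. Since `p_I(θ_∞) = 0` and `σ ↦ e^{-σ}` is `1`-Lipschitz on `[0, ∞)`, the
Lipschitz bound gives `q(σ) ≤ β K (T - σ)`, so `A(τ) ≥ (β K)⁻¹ log (T / (T - τ)) → ∞`.
-/

open Real Set Filter Topology MeasureTheory intervalIntegral

lemma exp_neg_sub_exp_neg_le {s t : ℝ} (hs : 0 ≤ s) (hst : s ≤ t) :
    exp (-s) - exp (-t) ≤ t - s := by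
  have hsplit : exp (-t) = exp (-s) * exp (-(t - s)) := by rw [← exp_add]; ring_nf
  have hdecay : 1 - exp (-(t - s)) ≤ t - s := by linarith [one_sub_le_exp_neg (t - s)]
  have hfactor : 0 ≤ 1 - exp (-(t - s)) := by
    linarith [exp_le_one_iff.mpr (by linarith : -(t - s) ≤ 0)]
  calc exp (-s) - exp (-t) = exp (-s) * (1 - exp (-(t - s))) := by rw [hsplit]; ring
    _ ≤ 1 * (1 - exp (-(t - s))) :=
        mul_le_mul_of_nonneg_right (exp_le_one_iff.mpr (by linarith)) hfactor
    _ ≤ t - s := by linarith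

lemma LipschitzOnWith.le_mul_sub_of_eq_zero {f : ℝ → ℝ} {K : NNReal} {s : Set ℝ} {x y : ℝ}
    (hf : LipschitzOnWith K f s) (hx : x ∈ s) (hy : y ∈ s) (hxy : x ≤ y) (hfx : f x = 0) :
    f y ≤ K * (y - x) := by
  have h := hf.dist_le_mul y hy x hx
  rw [Real.dist_eq, Real.dist_eq, hfx, sub_zero, abs_of_nonneg (sub_nonneg.mpr hxy)] at h
  exact (le_abs_self _).trans h

section Integral

variable {f g : ℝ → ℝ} {a b : ℝ}

lemma strictMonoOn_integral_of_pos (hf : ContinuousOn f (Ico a b))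
    (hpos : ∀ x ∈ Ico a b, 0 < f x) :
    StrictMonoOn (fun τ => ∫ σ in a..τ, f σ) (Ico a b) := by
  have hint : ∀ {x y}, a ≤ x → x ≤ y → y < b → IntervalIntegrable f volume x y :=
    fun hax hxy hyb => (hf.mono (Icc_subset_Ico hax hyb)).intervalIntegrable_of_Icc hxy
  intro x hx y hy hxy
  have hdiff := integral_interval_sub_left (hint le_rfl hy.1 hy.2) (hint le_rfl hx.1 hx.2)
  have hpos_xy : 0 < ∫ σ in x..y, f σ :=
    intervalIntegral_pos_of_pos_on (hint hx.1 hxy.le hy.2)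
      (fun σ hσ => hpos σ ⟨hx.1.trans hσ.1.le, hσ.2.trans hy.2⟩) hxy
  linarith

lemma tendsto_integral_inv_sub_atTop (hab : a < b) :
    Tendsto (fun τ => ∫ σ in a..τ, (b - σ)⁻¹) (𝓝[<] b) atTop := by
  have hlog : Tendsto (fun τ => log (b - a) - log (b - τ)) (𝓝[<] b) atTop := by
    have hsub : Tendsto (fun τ => b - τ) (𝓝[<] b) (𝓝[>] 0) := by
      have := ((continuous_sub_left b).tendsto' b 0 (sub_self b)).mono_left
        (nhdsWithin_le_nhds (s := Iio b))
      exact tendsto_nhdsWithin_iff.mpr ⟨this, eventually_nhdsWithin_of_forall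
        fun τ (hτ : τ < b) => sub_pos.mpr hτ⟩
    have hneg : Tendsto (fun τ => -log (b - τ)) (𝓝[<] b) atTop :=
      tendsto_neg_atBot_atTop.comp (tendsto_log_nhdsGT_zero.comp hsub)
    simpa only [sub_eq_add_neg] using tendsto_atTop_add_const_left _ (log (b - a)) hneg
  refine hlog.congr' ?_
  filter_upwards [Ioo_mem_nhdsLT hab] with τ hτ
  rw [integral_comp_sub_left (fun u => u⁻¹) b,
    integral_inv_of_pos (sub_pos.mpr hτ.2) (sub_pos.mpr hab),
    log_div (sub_pos.mpr hab).ne' (sub_pos.mpr hτ.2).ne']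

lemma tendsto_integral_atTop_of_le (hab : a < b) (hf : ContinuousOn f (Ico a b))
    (hg : ContinuousOn g (Ico a b)) (hgf : ∀ x ∈ Ico a b, g x ≤ f x)
    (hg_top : Tendsto (fun τ => ∫ σ in a..τ, g σ) (𝓝[<] b) atTop) :
    Tendsto (fun τ => ∫ σ in a..τ, f σ) (𝓝[<] b) atTop := by
  refine tendsto_atTop_mono' _ ?_ hg_top
  filter_upwards [Ioo_mem_nhdsLT hab] with τ hτ
  have hsub : Icc a τ ⊆ Ico a b := Icc_subset_Ico le_rfl hτ.2
  exact integral_mono_on hτ.1.le ((hg.mono hsub).intervalIntegrable_of_Icc hτ.1.le)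
    ((hf.mono hsub).intervalIntegrable_of_Icc hτ.1.le) fun x hx => hgf x (hsub hx)

lemma tendsto_integral_one_div_atTop_of_le_mul_sub {C : ℝ} (hab : a < b)
    (hf : ContinuousOn f (Ico a b)) (hpos : ∀ x ∈ Ico a b, 0 < f x)
    (hle : ∀ x ∈ Ico a b, f x ≤ C * (b - x)) :
    Tendsto (fun τ => ∫ σ in a..τ, 1 / f σ) (𝓝[<] b) atTop := by
  have ha : a ∈ Ico a b := ⟨le_rfl, hab⟩
  have hC : 0 < C := pos_of_mul_pos_left ((hpos a ha).trans_le (hle a ha)) (sub_pos.mpr hab).le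
  have hbound : ∀ x ∈ Ico a b, C⁻¹ * (b - x)⁻¹ ≤ 1 / f x := fun x hx => by
    rw [← mul_inv, ← one_div]
    exact one_div_le_one_div_of_le (hpos x hx) (hle x hx)
  refine tendsto_integral_atTop_of_le (g := fun x => C⁻¹ * (b - x)⁻¹) hab
    (continuousOn_const.div hf fun x hx => (hpos x hx).ne')
    (continuousOn_const.mul ((continuousOn_const.sub continuousOn_id).inv₀
      fun x hx => (sub_pos.mpr hx.2).ne')) hbound ?_
  simp only [intervalIntegral.integral_const_mul]
  exact (tendsto_integral_inv_sub_atTop hab).const_mul_atTop (inv_pos.mpr hC)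

end Integral

/-- `A(τ) = ∫₀^τ dσ/(β p_I(e^{-σ}))` is strictly increasing on
`[0, τ̂*)` where `τ̂* = -log θ_∞`, and `A(τ) → ∞` as `τ ↑ τ̂*`. -/
theorem sir_time_change_diverges (pI : ℝ → ℝ) (β θinf : ℝ) (hβ : 0 < β)
    (hθinf : θinf ∈ Set.Ioo (0:ℝ) 1)
    (K : NNReal) (hLip : LipschitzOnWith K pI (Set.Icc θinf 1))
    (hzero : pI θinf = 0)
    (hpos : ∀ σ ∈ Set.Ico (0:ℝ) (-Real.log θinf), 0 < pI (Real.exp (-σ))) :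
    StrictMonoOn (fun τ => ∫ σ in (0:ℝ)..τ, 1 / (β * pI (Real.exp (-σ))))
        (Set.Ico 0 (-Real.log θinf)) ∧
    Filter.Tendsto (fun τ => ∫ σ in (0:ℝ)..τ, 1 / (β * pI (Real.exp (-σ))))
        (nhdsWithin (-Real.log θinf) (Set.Iio (-Real.log θinf))) Filter.atTop := by
  set T := -log θinf
  have hT : 0 < T := neg_pos.mpr (log_neg hθinf.1 hθinf.2)
  have hθ : exp (-T) = θinf := by simp [T, exp_log hθinf.1]
  have hmaps : MapsTo (fun σ => exp (-σ)) (Ico 0 T) (Icc θinf 1) := fun σ hσ =>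
    ⟨hθ ▸ exp_le_exp.mpr (neg_le_neg hσ.2.le), exp_le_one_iff.mpr (neg_nonpos.mpr hσ.1)⟩
  have hq_pos : ∀ σ ∈ Ico 0 T, 0 < β * pI (exp (-σ)) := fun σ hσ => mul_pos hβ (hpos σ hσ)
  have hq_cont : ContinuousOn (fun σ => β * pI (exp (-σ))) (Ico 0 T) :=
    continuousOn_const.mul (hLip.continuousOn.comp (by fun_prop) hmaps)
  have hq_le : ∀ σ ∈ Ico 0 T, β * pI (exp (-σ)) ≤ β * K * (T - σ) := fun σ hσ => by
    have hlin := hLip.le_mul_sub_of_eq_zero ⟨le_rfl, hθinf.2.le⟩ (hmaps hσ) (hmaps hσ).1 hzero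
    rw [mul_assoc]
    refine mul_le_mul_of_nonneg_left (hlin.trans (mul_le_mul_of_nonneg_left ?_ K.coe_nonneg)) hβ.le
    simpa only [hθ] using exp_neg_sub_exp_neg_le hσ.1 hσ.2.le
  exact ⟨strictMonoOn_integral_of_pos (continuousOn_const.div hq_cont fun σ hσ => (hq_pos σ hσ).ne')
      fun σ hσ => one_div_pos.mpr (hq_pos σ hσ),
    tendsto_integral_one_div_atTop_of_le_mul_sub hT hq_cont hq_pos hq_le⟩
end

section
/- Let h_S(θ) = α_S ∑_{k≥0} k θ^k p_k where p_k ~ c k^{-3} as k → ∞ (i.e. α = 2), α_S, c > 0. Then h_S(1) - h_S(1-x) ≍ x|log x| as x ↓ 0, and consequently ∫_0^{x_0} dx/(h_S(1)-h_S(1-x)) = ∞ for any small x_0 > 0. -/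
/-!
Write `h_S(1) - h_S(1 - x) = α_S ∑ a_k (1 - (1 - x)^k)` with `a_k = k p_k`, so that `k² a_k` stays
between two positive constants for large `k`. With `n = ⌊1/x⌋`, the factor `1 - (1 - x)^k` is
comparable to `k x` for `k ≤ n` and bounded by `1` beyond, so the sum is comparable to
`x ∑_{k ≤ n} k a_k ≍ x ∑_{k ≤ n} 1/k ≍ x |log x|`, the tail contributing only `O(∑_{k > n} 1/k²) = O(x)`.
Since `(log |log x|)' = 1/(x log x)` and `log |log x| → ∞` as `x → 0⁺`, the reciprocal of a
function of size `O(x |log x|)` is not integrable near `0`.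
-/

open Real Filter Topology Finset Asymptotics MeasureTheory

theorem one_sub_one_sub_pow_le_mul {x : ℝ} (hx : x ≤ 2) (k : ℕ) :
    1 - (1 - x) ^ k ≤ k * x := by
  have := one_add_mul_le_pow (a := -x) (by linarith) k
  rw [← sub_eq_add_neg] at this
  linarith

theorem mul_div_two_le_one_sub_one_sub_pow {x : ℝ} (hx0 : 0 ≤ x) (hx1 : x ≤ 1) {k : ℕ}
    (hkx : k * x ≤ 1) : k * x / 2 ≤ 1 - (1 - x) ^ k := by
  have hkx0 : 0 ≤ (k : ℝ) * x := by positivity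
  have hexp : (1 - x) ^ k ≤ exp (-(k * x)) := by
    calc (1 - x) ^ k ≤ exp (-x) ^ k := pow_le_pow_left₀ (by linarith) (one_sub_le_exp_neg x) k
      _ = exp (-(k * x)) := by rw [← exp_nat_mul]; ring_nf
  have hinv : exp (-(k * x)) ≤ (1 + k * x)⁻¹ := by
    rw [exp_neg]
    exact inv_anti₀ (by positivity) (by linarith [add_one_le_exp (k * x)])
  have hhalf : (1 + k * x)⁻¹ ≤ 1 - k * x / 2 := by
    rw [inv_le_iff_one_le_mul₀ (by positivity)]
    nlinarith
  linarith

theorem harmonic_eq_sum_Ioc (n : ℕ) : (harmonic n : ℝ) = ∑ k ∈ Ioc 0 n, (k : ℝ)⁻¹ := by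
  simp [harmonic_eq_sum_Icc, ← Finset.Icc_add_one_left_eq_Ioc]

theorem sum_Ioc_inv_eq_harmonic_sub {N n : ℕ} (h : N ≤ n) :
    ∑ k ∈ Ioc N n, (k : ℝ)⁻¹ = harmonic n - harmonic N := by
  rw [harmonic_eq_sum_Ioc, harmonic_eq_sum_Ioc, ← sum_Ioc_consecutive _ N.zero_le h]
  ring

theorem not_integrableOn_inv_of_isBigO_mul_log {f : ℝ → ℝ} {y : ℝ} (hy : 0 < y)
    (hf : f =O[𝓝[>] 0] fun x => x * log x) (hf0 : ∀ᶠ x in 𝓝[>] 0, f x ≠ 0) :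
    ¬ IntegrableOn (fun x => (f x)⁻¹) (Set.Ioo 0 y) := by
  have hsmall : ∀ᶠ x in 𝓝[>] (0 : ℝ), x ∈ Set.Ioo 0 1 := Ioo_mem_nhdsGT one_pos
  -- `log (log t) = log |log t|` blows up at `0⁺`, with derivative `(x log x)⁻¹`
  have hderiv : ∀ x ∈ Set.Ioo (0 : ℝ) 1,
      HasDerivAt (fun t => log (log t)) (x * log x)⁻¹ x := fun x hx => by
    convert (hasDerivAt_log hx.1.ne').log (log_neg hx.1 hx.2).ne using 1
    field_simp
  refine not_integrableOn_of_tendsto_norm_atTop_of_deriv_isBigO_filter _ (Ioo_mem_nhdsGT hy)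
    (hsmall.mono fun x hx => (hderiv x hx).differentiableAt) ?_ ?_
  · have : Tendsto (fun x => log |log x|) (𝓝[>] 0) atTop :=
      tendsto_log_atTop.comp (tendsto_abs_atBot_atTop.comp tendsto_log_nhdsGT_zero)
    simpa only [log_abs, Real.norm_eq_abs, Function.comp_def] using
      tendsto_abs_atTop_atTop.comp this
  · refine (EventuallyEq.isBigO ?_).trans (hf.inv_rev (hf0.mono fun x hx h => absurd h hx))
    exact hsmall.mono fun x hx => (hderiv x hx).deriv

theorem summable_of_sq_mul_le {a : ℕ → ℝ} {N : ℕ} {C : ℝ} (ha : ∀ k, 0 ≤ a k)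
    (hup : ∀ k, N < k → (k : ℝ) ^ 2 * a k ≤ C) : Summable a := by
  refine summable_of_isBigO_nat (summable_nat_pow_inv.2 one_lt_two) (IsBigO.of_bound C ?_)
  filter_upwards [eventually_gt_atTop N] with k hk
  have hk0 : (0 : ℝ) < k := by exact_mod_cast N.zero_le.trans_lt hk
  rw [norm_of_nonneg (ha k), norm_of_nonneg (by positivity), ← div_eq_mul_inv,
    le_div_iff₀ (by positivity), mul_comm]
  exact hup k hk

section Estimates

variable {a : ℕ → ℝ} {N : ℕ} {x C₀ : ℝ}

theorem one_sub_one_sub_pow_mem_Icc (hx0 : 0 ≤ x) (hx1 : x ≤ 1) (k : ℕ) :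
    1 - (1 - x) ^ k ∈ Set.Icc 0 1 :=
  ⟨sub_nonneg.2 (pow_le_one₀ (by linarith) (by linarith)),
    sub_le_self _ (pow_nonneg (by linarith) k)⟩

theorem summable_mul_one_sub_one_sub_pow (ha : Summable a) (ha0 : ∀ k, 0 ≤ a k)
    (hx0 : 0 ≤ x) (hx1 : x ≤ 1) : Summable fun k => a k * (1 - (1 - x) ^ k) :=
  ha.of_nonneg_of_le (fun k => mul_nonneg (ha0 k) (one_sub_one_sub_pow_mem_Icc hx0 hx1 k).1)
    (fun k => mul_le_of_le_one_right (ha0 k) (one_sub_one_sub_pow_mem_Icc hx0 hx1 k).2)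

theorem floor_inv_bounds (hx : 0 < x) (hxN : (N + 1) * x ≤ 1) :
    N + 1 ≤ ⌊x⁻¹⌋₊ ∧ (⌊x⁻¹⌋₊ : ℝ) * x ≤ 1 ∧ 1 ≤ (⌊x⁻¹⌋₊ + 1) * x := by
  refine ⟨Nat.le_floor ?_, ?_, ?_⟩
  · push_cast
    rwa [inv_eq_one_div, le_div_iff₀ hx]
  · rw [← le_div_iff₀ hx, ← inv_eq_one_div]
    exact Nat.floor_le (by positivity)
  · rw [← inv_le_iff_one_le_mul₀ hx]
    exact (Nat.lt_floor_add_one _).le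

theorem mul_log_le_tsum_mul_one_sub_one_sub_pow {c₀ : ℝ} (ha : Summable a)
    (ha0 : ∀ k, 0 ≤ a k) (hc₀ : 0 ≤ c₀) (hlow : ∀ k, N < k → c₀ ≤ (k : ℝ) ^ 2 * a k)
    (hx : 0 < x) (hxN : (N + 1) * x ≤ 1) :
    c₀ / 2 * x * (-log x - 1 - log N) ≤ ∑' k, a k * (1 - (1 - x) ^ k) := by
  set n := ⌊x⁻¹⌋₊
  obtain ⟨hNn, hnx, hxn⟩ := floor_inv_bounds hx hxN
  have hx1 : x ≤ 1 := by nlinarith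
  have hterm : ∀ k ∈ Ioc N n, c₀ / 2 * x * (k : ℝ)⁻¹ ≤ a k * (1 - (1 - x) ^ k) := by
    intro k hk
    obtain ⟨hNk, hkn⟩ := mem_Ioc.1 hk
    have hk0 : (0 : ℝ) < k := by exact_mod_cast N.zero_le.trans_lt hNk
    have hkx : (k : ℝ) * x ≤ 1 :=
      (mul_le_mul_of_nonneg_right (by exact_mod_cast hkn) hx.le).trans hnx
    calc c₀ / 2 * x * (k : ℝ)⁻¹ ≤ (k : ℝ) ^ 2 * a k / 2 * x * (k : ℝ)⁻¹ := by
          gcongr; exact hlow k hNk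
      _ = a k * (k * x / 2) := by field_simp
      _ ≤ a k * (1 - (1 - x) ^ k) :=
          mul_le_mul_of_nonneg_left (mul_div_two_le_one_sub_one_sub_pow hx.le hx1 hkx) (ha0 k)
  have hharm : -log x - 1 - log N ≤ ∑ k ∈ Ioc N n, (k : ℝ)⁻¹ := by
    rw [sum_Ioc_inv_eq_harmonic_sub (by omega)]
    have := log_add_one_le_harmonic n
    have := harmonic_le_one_add_log N
    have : -log x ≤ log (n + 1) := by
      rw [← log_inv]
      exact log_le_log (by positivity) ((inv_le_iff_one_le_mul₀ hx).2 hxn)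
    push_cast at *
    linarith
  have hsum := summable_mul_one_sub_one_sub_pow ha ha0 hx.le hx1
  calc c₀ / 2 * x * (-log x - 1 - log N) ≤ c₀ / 2 * x * ∑ k ∈ Ioc N n, (k : ℝ)⁻¹ := by
        gcongr
    _ = ∑ k ∈ Ioc N n, c₀ / 2 * x * (k : ℝ)⁻¹ := mul_sum _ _ _
    _ ≤ ∑ k ∈ Ioc N n, a k * (1 - (1 - x) ^ k) := sum_le_sum hterm
    _ ≤ ∑' k, a k * (1 - (1 - x) ^ k) :=
        hsum.sum_le_tsum _ fun k _ => mul_nonneg (ha0 k) (one_sub_one_sub_pow_mem_Icc hx.le hx1 k).1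

theorem sum_Ioc_mul_one_sub_one_sub_pow_le (ha0 : ∀ k, 0 ≤ a k)
    (hup : ∀ k, N < k → (k : ℝ) ^ 2 * a k ≤ C₀) (hx0 : 0 ≤ x) (hx2 : x ≤ 2) (n : ℕ) :
    ∑ k ∈ Ioc N n, a k * (1 - (1 - x) ^ k) ≤ C₀ * x * harmonic n := by
  have hC₀ : 0 ≤ C₀ := (mul_nonneg (sq_nonneg _) (ha0 _)).trans (hup (N + 1) N.lt_succ_self)
  calc ∑ k ∈ Ioc N n, a k * (1 - (1 - x) ^ k) ≤ ∑ k ∈ Ioc N n, C₀ * x * (k : ℝ)⁻¹ := by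
        refine sum_le_sum fun k hk => ?_
        have hNk := (mem_Ioc.1 hk).1
        have hk0 : (0 : ℝ) < k := by exact_mod_cast N.zero_le.trans_lt hNk
        calc a k * (1 - (1 - x) ^ k) ≤ a k * (k * x) :=
              mul_le_mul_of_nonneg_left (one_sub_one_sub_pow_le_mul hx2 k) (ha0 k)
          _ = x * (k ^ 2 * a k) * (k : ℝ)⁻¹ := by field_simp
          _ ≤ C₀ * x * (k : ℝ)⁻¹ := by rw [mul_comm C₀]; gcongr; exact hup k hNk
    _ = C₀ * x * ∑ k ∈ Ioc N n, (k : ℝ)⁻¹ := (mul_sum _ _ _).symm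
    _ ≤ C₀ * x * harmonic n := by
        rw [harmonic_eq_sum_Ioc]
        gcongr
        exact N.zero_le

theorem sum_Ioo_mul_one_sub_one_sub_pow_le (ha0 : ∀ k, 0 ≤ a k)
    (hup : ∀ k, N < k → (k : ℝ) ^ 2 * a k ≤ C₀) (hx0 : 0 ≤ x) (hx1 : x ≤ 1) {n : ℕ}
    (hNn : N ≤ n) (m : ℕ) :
    ∑ k ∈ Ioo n m, a k * (1 - (1 - x) ^ k) ≤ C₀ * (2 / (n + 1)) := by
  have hC₀ : 0 ≤ C₀ := (mul_nonneg (sq_nonneg _) (ha0 _)).trans (hup (N + 1) N.lt_succ_self)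
  calc ∑ k ∈ Ioo n m, a k * (1 - (1 - x) ^ k) ≤ ∑ k ∈ Ioo n m, C₀ * ((k : ℝ) ^ 2)⁻¹ := by
        refine sum_le_sum fun k hk => ?_
        have hNk : N < k := hNn.trans_lt (mem_Ioo.1 hk).1
        have hk0 : (0 : ℝ) < k := by exact_mod_cast N.zero_le.trans_lt hNk
        calc a k * (1 - (1 - x) ^ k) ≤ a k :=
              mul_le_of_le_one_right (ha0 k) (one_sub_one_sub_pow_mem_Icc hx0 hx1 k).2
          _ ≤ C₀ * ((k : ℝ) ^ 2)⁻¹ := by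
              rw [← div_eq_mul_inv, le_div_iff₀ (by positivity), mul_comm]
              exact hup k hNk
    _ = C₀ * ∑ k ∈ Ioo n m, ((k : ℝ) ^ 2)⁻¹ := (mul_sum _ _ _).symm
    _ ≤ C₀ * (2 / (n + 1)) := by gcongr; exact sum_Ioo_inv_sq_le n m

theorem tsum_mul_one_sub_one_sub_pow_le (ha0 : ∀ k, 0 ≤ a k)
    (hup : ∀ k, N < k → (k : ℝ) ^ 2 * a k ≤ C₀) (hx : 0 < x) (hxN : (N + 1) * x ≤ 1) :
    ∑' k, a k * (1 - (1 - x) ^ k) ≤ x * (∑ k ∈ range (N + 1), k * a k + C₀ * (3 - log x)) := by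
  set n := ⌊x⁻¹⌋₊
  obtain ⟨hNn, hnx, hxn⟩ := floor_inv_bounds hx hxN
  have hx1 : x ≤ 1 := by nlinarith
  have hn0 : (0 : ℝ) < n := by exact_mod_cast N.succ_pos.trans_le hNn
  have hC₀ : 0 ≤ C₀ := (mul_nonneg (sq_nonneg _) (ha0 _)).trans (hup (N + 1) N.lt_succ_self)
  have hterm0 k : 0 ≤ a k * (1 - (1 - x) ^ k) :=
    mul_nonneg (ha0 k) (one_sub_one_sub_pow_mem_Icc hx.le hx1 k).1
  have hhead : ∑ k ∈ range (N + 1), a k * (1 - (1 - x) ^ k) ≤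
      x * ∑ k ∈ range (N + 1), k * a k := by
    rw [mul_sum]
    refine sum_le_sum fun k _ => ?_
    nlinarith [one_sub_one_sub_pow_le_mul (by linarith : x ≤ 2) k, ha0 k]
  have hmid : C₀ * x * harmonic n ≤ C₀ * x * (1 - log x) := by
    have := log_nonpos (by positivity) hnx
    rw [log_mul hn0.ne' hx.ne'] at this
    have := harmonic_le_one_add_log n
    gcongr
    linarith
  have htail : C₀ * (2 / (n + 1)) ≤ C₀ * (2 * x) := by
    gcongr
    rw [div_le_iff₀ (by positivity)]
    linarith
  refine Real.tsum_le_of_sum_range_le hterm0 fun m => ?_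
  calc ∑ k ∈ range m, a k * (1 - (1 - x) ^ k)
      ≤ ∑ k ∈ range (max m (n + 1)), a k * (1 - (1 - x) ^ k) :=
        sum_le_sum_of_subset_of_nonneg (range_mono (le_max_left _ _)) fun k _ _ => hterm0 k
    _ = ∑ k ∈ range (N + 1), a k * (1 - (1 - x) ^ k) +
          ∑ k ∈ Ioc N n, a k * (1 - (1 - x) ^ k) +
          ∑ k ∈ Ioo n (max m (n + 1)), a k * (1 - (1 - x) ^ k) := by
        rw [← Ico_add_one_add_one_eq_Ioc, ← Ico_add_one_left_eq_Ioo,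
          sum_range_add_sum_Ico _ (show N + 1 ≤ n + 1 by omega),
          sum_range_add_sum_Ico _ (le_max_right _ _)]
    _ ≤ _ := by
        linarith [sum_Ioc_mul_one_sub_one_sub_pow_le ha0 hup hx.le (by linarith) n,
          sum_Ioo_mul_one_sub_one_sub_pow_le ha0 hup hx.le hx1 (by omega : N ≤ n) (max m (n + 1))]

theorem exists_bounds_tsum_mul_one_sub_one_sub_pow {c₀ : ℝ} (ha0 : ∀ k, 0 ≤ a k) (hc₀ : 0 < c₀)
    (hlow : ∀ k, N < k → c₀ ≤ (k : ℝ) ^ 2 * a k) (hup : ∀ k, N < k → (k : ℝ) ^ 2 * a k ≤ C₀) :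
    ∃ c₁ c₂ x₀ : ℝ, 0 < c₁ ∧ c₁ ≤ c₂ ∧ 0 < x₀ ∧ x₀ < 1 ∧ ∀ x ∈ Set.Ioo 0 x₀,
      c₁ * (x * |log x|) ≤ ∑' k, a k * (1 - (1 - x) ^ k) ∧
        ∑' k, a k * (1 - (1 - x) ^ k) ≤ c₂ * (x * |log x|) := by
  set A := ∑ k ∈ range (N + 1), (k : ℝ) * a k
  have hA : 0 ≤ A := sum_nonneg fun k _ => mul_nonneg k.cast_nonneg (ha0 k)
  have hc₀C₀ : c₀ ≤ C₀ := (hlow (N + 1) N.lt_succ_self).trans (hup (N + 1) N.lt_succ_self)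
  have hlogN : 0 ≤ log N := log_natCast_nonneg N
  -- below `x₀`, `|log x|` dominates both `1 + log N` and the constant terms of the upper bound
  refine ⟨c₀ / 4, A + 4 * C₀, min (exp (-(2 * (1 + log N)))) (N + 1)⁻¹, by positivity,
    by linarith, by positivity, (min_le_left _ _).trans_lt (exp_lt_one_iff.2 (by linarith)), ?_⟩
  rintro x ⟨hx, hxx₀⟩
  have hxN : (N + 1) * x ≤ 1 := by
    rw [← le_inv_mul_iff₀ (by positivity), mul_one]
    exact (hxx₀.trans_le (min_le_right _ _)).le
  have hL : 2 * (1 + log N) ≤ -log x := by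
    have := (log_lt_iff_lt_exp hx).2 (hxx₀.trans_le (min_le_left _ _))
    linarith
  have habs : |log x| = -log x := abs_of_nonpos (by linarith)
  have hlower := mul_log_le_tsum_mul_one_sub_one_sub_pow
    (summable_of_sq_mul_le ha0 hup) ha0 hc₀.le hlow hx hxN
  have hupper := tsum_mul_one_sub_one_sub_pow_le ha0 hup hx hxN
  rw [habs]
  constructor
  · nlinarith [mul_nonneg (mul_nonneg hc₀.le hx.le) (by linarith : 0 ≤ -log x - 2 * (1 + log N))]
  · nlinarith [mul_nonneg (mul_nonneg hx.le (by linarith : 0 ≤ A + 3 * C₀))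
      (by linarith : 0 ≤ -log x - 1)]

end Estimates

theorem tsum_sub_tsum_mul_one_sub_pow {q : ℕ → ℝ} (hq : Summable q) (hq0 : ∀ k, 0 ≤ q k)
    {x : ℝ} (hx0 : 0 ≤ x) (hx1 : x ≤ 1) :
    ∑' k, q k - ∑' k, q k * (1 - x) ^ k = ∑' k, q k * (1 - (1 - x) ^ k) := by
  rw [sub_eq_iff_eq_add', ← (hq.of_nonneg_of_le
    (fun k => mul_nonneg (hq0 k) (pow_nonneg (by linarith) k))
    fun k => mul_le_of_le_one_right (hq0 k) (pow_le_one₀ (by linarith) (by linarith))).tsum_add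
      (summable_mul_one_sub_one_sub_pow hq hq0 hx0 hx1)]
  exact tsum_congr fun k => by ring

theorem sir_hS_asymptotics_infinite_general (p : ℕ → ℝ) (αS c : ℝ)
    (hαS : 0 < αS) (hc : 0 < c)
    (hp : ∀ k, 0 ≤ p k)
    (htail : Filter.Tendsto (fun k : ℕ => p k * (k : ℝ) ^ 3)
      Filter.atTop (nhds c))
    (hS : ℝ → ℝ)
    (hSdef : ∀ θ, hS θ = αS * ∑' k : ℕ, (k : ℝ) * θ ^ k * p k) :
    ∃ c₁ c₂ x₀ : ℝ, 0 < c₁ ∧ c₁ ≤ c₂ ∧ 0 < x₀ ∧ x₀ < 1 ∧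
      (∀ x ∈ Set.Ioo (0:ℝ) x₀,
        c₁ * (x * |Real.log x|) ≤ hS 1 - hS (1 - x) ∧
          hS 1 - hS (1 - x) ≤ c₂ * (x * |Real.log x|)) ∧
      ∀ y ∈ Set.Ioo (0:ℝ) x₀,
        ¬ MeasureTheory.IntegrableOn (fun x => (hS 1 - hS (1 - x))⁻¹) (Set.Ioo 0 y) := by
  obtain ⟨N, hN⟩ := eventually_atTop.1 <| htail.eventually <|
    Icc_mem_nhds (half_lt_self hc) (by linarith : c < 2 * c)
  have ha0 (k : ℕ) : 0 ≤ (k : ℝ) * p k := mul_nonneg k.cast_nonneg (hp k)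
  have hcube (k : ℕ) : (k : ℝ) ^ 2 * (k * p k) = p k * k ^ 3 := by ring
  have hlow (k : ℕ) (hk : N < k) : c / 2 ≤ (k : ℝ) ^ 2 * (k * p k) := hcube k ▸ (hN k hk.le).1
  have hup (k : ℕ) (hk : N < k) : (k : ℝ) ^ 2 * (k * p k) ≤ 2 * c := hcube k ▸ (hN k hk.le).2
  have hdiff x (hx0 : 0 ≤ x) (hx1 : x ≤ 1) :
      hS 1 - hS (1 - x) = αS * ∑' k, k * p k * (1 - (1 - x) ^ k) := by
    rw [← tsum_sub_tsum_mul_one_sub_pow (summable_of_sq_mul_le ha0 hup) ha0 hx0 hx1, hSdef,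
      hSdef, mul_sub]
    congr 2 <;> exact tsum_congr fun k => by ring
  obtain ⟨c₁, c₂, x₀, hc₁, hc₁₂, hx₀, hx₀1, hbounds⟩ :=
    exists_bounds_tsum_mul_one_sub_one_sub_pow ha0 (half_pos hc) hlow hup
  have hmain : ∀ x ∈ Set.Ioo 0 x₀, αS * c₁ * (x * |log x|) ≤ hS 1 - hS (1 - x) ∧
      hS 1 - hS (1 - x) ≤ αS * c₂ * (x * |log x|) := fun x hx => by
    rw [hdiff x hx.1.le (by linarith [hx.2]), mul_assoc, mul_assoc]
    exact ⟨by gcongr; exact (hbounds x hx).1, by gcongr; exact (hbounds x hx).2⟩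
  refine ⟨αS * c₁, αS * c₂, x₀, by positivity, by gcongr, hx₀, hx₀1, hmain, fun y hy => ?_⟩
  have hpos : ∀ x ∈ Set.Ioo 0 x₀, 0 < hS 1 - hS (1 - x) := fun x hx => by
    have hx0 := hx.1
    have hlog : log x ≠ 0 := (log_neg hx0 (hx.2.trans hx₀1)).ne
    exact lt_of_lt_of_le (by positivity) (hmain x hx).1
  refine not_integrableOn_inv_of_isBigO_mul_log hy.1 (IsBigO.of_bound (αS * c₂) ?_)
    (eventually_of_mem (Ioo_mem_nhdsGT hx₀) fun x hx => (hpos x hx).ne')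
  filter_upwards [Ioo_mem_nhdsGT hx₀] with x hx
  rw [norm_of_nonneg (hpos x hx).le, norm_mul, norm_of_nonneg hx.1.le, Real.norm_eq_abs]
  exact (hmain x hx).2

/-- if `p_k ~ c k^{-3}` then `h_S(1) - h_S(1-x) ≍ x|log x|` as `x ↓ 0`,
and `∫₀^{y} dx/(h_S(1)-h_S(1-x)) = ∞` for every small `y > 0`. -/
theorem sir_hS_asymptotics_infinite (p : ℕ → ℝ) (αS c : ℝ)
    (hαS : 0 < αS) (hc : 0 < c)
    (hp : ∀ k, 0 ≤ p k) (hpsum : ∑' k : ℕ, p k = 1)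
    (htail : Filter.Tendsto (fun k : ℕ => p k * (k : ℝ) ^ 3)
      Filter.atTop (nhds c))
    (hS : ℝ → ℝ)
    (hSdef : ∀ θ, hS θ = αS * ∑' k : ℕ, (k : ℝ) * θ ^ k * p k) :
    ∃ c₁ c₂ x₀ : ℝ, 0 < c₁ ∧ c₁ ≤ c₂ ∧ 0 < x₀ ∧ x₀ < 1 ∧
      (∀ x ∈ Set.Ioo (0:ℝ) x₀,
        c₁ * (x * |Real.log x|) ≤ hS 1 - hS (1 - x) ∧
          hS 1 - hS (1 - x) ≤ c₂ * (x * |Real.log x|)) ∧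
      ∀ y ∈ Set.Ioo (0:ℝ) x₀,
        ¬ MeasureTheory.IntegrableOn (fun x => (hS 1 - hS (1 - x))⁻¹) (Set.Ioo 0 y) :=
  sir_hS_asymptotics_infinite_general p αS c hαS hc hp htail hS hSdef
end

section
/- Let θ_t solve dθ_t/dt = -β θ_t p_I(θ_t) with p_I, p_S as above. Then p_I(θ_t) satisfies d/dt[p_I(θ_t)] = p_I(θ_t)( -(ρ+β) + β p_I(θ_t) + β p_S(θ_t) θ_t g_S''(θ_t)/g_S'(θ_t) ). -/
/-!
Since `p_I = h_I / h_X` with `h_X(θ) = μθ²`, a direct computation gives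
`p_I'(θ) = (α_S (g_S'(θ) - θ g_S''(θ)) + μ_R + μρ/β) / (μθ²)`, and the Volz equation is the chain
rule `d/dt p_I(θ_t) = p_I'(θ_t) · (-β θ_t p_I(θ_t))` rewritten in terms of `p_I` and `p_S`.
The only analytic input is that `g_S` is twice differentiable on `(-1, 1)`: a power series with
summable coefficients has radius of convergence at least `1`.
-/

open FormalMultilinearSeries in
theorem analyticAt_tsum_mul_pow {a : ℕ → ℝ} (ha : Summable a) {x : ℝ} (hx : |x| < 1) :
    AnalyticAt ℝ (fun θ => ∑' k, a k * θ ^ k) x := by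
  set P := ofScalars ℝ a
  have hrad : 1 ≤ P.radius := by
    simpa [P, ofScalars_norm] using
      P.le_radius_of_summable_norm (r := 1) (by simpa [P, ofScalars_norm] using ha.abs)
  have hxP : x ∈ Metric.eball 0 P.radius := by
    rw [Metric.mem_eball, edist_zero_right]
    refine lt_of_lt_of_le ?_ hrad
    rwa [enorm_eq_nnnorm, ENNReal.coe_lt_one_iff, ← NNReal.coe_lt_one, coe_nnnorm,
      Real.norm_eq_abs]
  have := (P.hasFPowerSeriesOnBall (zero_lt_one.trans_le hrad)).analyticAt_of_mem hxP
  rwa [← ofScalarsSum, ofScalarsSum_eq_tsum] at this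

theorem hasDerivAt_volz_pI {g : ℝ → ℝ} {αS μ β ρ μR x : ℝ}
    (hg : DifferentiableAt ℝ (deriv g) x) (hx : x ≠ 0) (hμ : μ ≠ 0) :
    HasDerivAt
      (fun θ => (μ * θ ^ 2 - αS * θ * deriv g θ - (μR * θ + μ * ρ / β * (θ * (1 - θ)))) /
        (μ * θ ^ 2))
      ((αS * (deriv g x - x * deriv (deriv g) x) + μR + μ * ρ / β) / (μ * x ^ 2)) x := by
  have hX : HasDerivAt (fun θ => μ * θ ^ 2) (μ * (2 * x)) x := by
    simpa using (hasDerivAt_pow 2 x).const_mul μ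
  have hS : HasDerivAt (fun θ => αS * θ * deriv g θ)
      (αS * deriv g x + αS * x * deriv (deriv g) x) x :=
    (((hasDerivAt_id x).const_mul αS).mul hg.hasDerivAt).congr_deriv (by simp only [id, mul_one])
  have hR : HasDerivAt (fun θ => μR * θ + μ * ρ / β * (θ * (1 - θ)))
      (μR + μ * ρ / β * (1 - 2 * x)) x :=
    (((hasDerivAt_id x).const_mul μR).add
      (((hasDerivAt_id x).mul ((hasDerivAt_id x).const_sub 1)).const_mul (μ * ρ / β))).congr_deriv
      (by simp only [id]; ring)
  refine (((hX.sub hS).sub hR).div hX (by positivity)).congr_deriv ?_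
  simp only [Pi.sub_apply]
  field_simp
  ring

theorem sir_volz_pI_general (p : ℕ → ℝ) (αS μ β ρ μR θinf : ℝ)
    (hpsum : ∑' k : ℕ, p k = 1)
    (hμ : 0 < μ) (hβ : 0 < β)
    (hθinf : θinf ∈ Set.Ioo (0:ℝ) 1)
    (gS hS hX hR hI pI pS : ℝ → ℝ)
    (hgSdef : ∀ θ, gS θ = ∑' k : ℕ, p k * θ ^ k)
    (hSdef : ∀ θ, hS θ = αS * θ * deriv gS θ)
    (hXdef : ∀ θ, hX θ = μ * θ ^ 2)
    (hRdef : ∀ θ, hR θ = μR * θ + μ * ρ / β * (θ * (1 - θ)))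
    (hIdef : ∀ θ, hI θ = hX θ - hS θ - hR θ)
    (hpIdef : ∀ θ, pI θ = hI θ / hX θ)
    (hpSdef : ∀ θ, pS θ = hS θ / hX θ)
    (θt : ℝ → ℝ) (hrange : ∀ t, θt t ∈ Set.Ioo θinf 1)
    (hgS' : ∀ t, 0 < deriv gS (θt t))
    (hode : ∀ t, HasDerivAt θt (-β * θt t * pI (θt t)) t) :
    ∀ t, HasDerivAt (fun s => pI (θt s))
      (pI (θt t) * (-(ρ + β) + β * pI (θt t) +
        β * pS (θt t) * (θt t * deriv (deriv gS) (θt t) / deriv gS (θt t)))) t := by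
  intro t
  have hx0 : 0 < θt t := hθinf.1.trans (hrange t).1
  have hp : Summable p := by
    by_contra h
    simp [tsum_eq_zero_of_not_summable h] at hpsum
  have hgS : AnalyticAt ℝ gS (θt t) := by
    rw [funext hgSdef]
    exact analyticAt_tsum_mul_pow hp (abs_lt.2 ⟨by linarith, (hrange t).2⟩)
  have hpI : pI = fun θ =>
      (μ * θ ^ 2 - αS * θ * deriv gS θ - (μR * θ + μ * ρ / β * (θ * (1 - θ)))) / (μ * θ ^ 2) := by
    ext θ
    rw [hpIdef, hIdef, hXdef, hSdef, hRdef]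
  have hpI' := hpI ▸ hasDerivAt_volz_pI (αS := αS) (ρ := ρ) (β := β) (μR := μR)
    hgS.deriv.differentiableAt hx0.ne' hμ.ne'
  refine (hpI'.comp t (hode t)).congr_deriv ?_
  have hD := (hgS' t).ne'
  rw [hpIdef, hpSdef, hIdef, hSdef, hXdef, hRdef]
  field_simp
  ring

/-- Volz equation for `p_I`: if `θ_t` solves `θ' = -β θ p_I(θ)`, then
`d/dt[p_I(θ_t)] = p_I(θ_t)(-(ρ+β) + β p_I(θ_t) + β p_S(θ_t) θ_t gS''(θ_t)/gS'(θ_t))`. -/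
theorem sir_volz_pI (p : ℕ → ℝ) (αS μ β ρ μR θinf : ℝ)
    (hp : ∀ k, 0 ≤ p k) (hpsum : ∑' k : ℕ, p k = 1)
    (h2 : Summable fun k : ℕ => (k : ℝ) ^ 2 * p k)
    (hαS : 0 < αS) (hμ : 0 < μ) (hβ : 0 < β) (hρ : 0 ≤ ρ) (hμR : 0 ≤ μR)
    (hθinf : θinf ∈ Set.Ioo (0:ℝ) 1)
    (gS hS hX hR hI pI pS : ℝ → ℝ)
    (hgSdef : ∀ θ, gS θ = ∑' k : ℕ, p k * θ ^ k)
    (hSdef : ∀ θ, hS θ = αS * θ * deriv gS θ)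
    (hXdef : ∀ θ, hX θ = μ * θ ^ 2)
    (hRdef : ∀ θ, hR θ = μR * θ + μ * ρ / β * (θ * (1 - θ)))
    (hIdef : ∀ θ, hI θ = hX θ - hS θ - hR θ)
    (hpIdef : ∀ θ, pI θ = hI θ / hX θ)
    (hpSdef : ∀ θ, pS θ = hS θ / hX θ)
    (θt : ℝ → ℝ) (hrange : ∀ t, θt t ∈ Set.Ioo θinf 1)
    (hgS' : ∀ t, 0 < deriv gS (θt t))
    (hode : ∀ t, HasDerivAt θt (-β * θt t * pI (θt t)) t) :
    ∀ t, HasDerivAt (fun s => pI (θt s))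
      (pI (θt t) * (-(ρ + β) + β * pI (θt t) +
        β * pS (θt t) * (θt t * deriv (deriv gS) (θt t) / deriv gS (θt t)))) t :=
  sir_volz_pI_general p αS μ β ρ μR θinf hpsum hμ hβ hθinf gS hS hX hR hI pI pS hgSdef hSdef hXdef
    hRdef hIdef hpIdef hpSdef θt hrange hgS' hode
end
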